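/- For any b ∈ ℝ³, the linear map L : ℝ³ → ℝ³, L(w) = w + w × b, is invertible, and its inverse is given explicitly by L^{-1}(c) = (c - c × b + ⟨c, b⟩ b) / (1 + |b|²). -/

import Mathlib

open scoped RealInnerProductSpace
noncomputable section

/-- ℝ³ with the Euclidean structure. -/
abbrev R3 := EuclideanSpace ℝ (Fin 3)

/-- Cylindrical radius r(x) = √(x₁² + x₂²). -/
def rr (x : R3) : ℝ := Real.sqrt (x 0 ^ 2 + x 1 ^ 2)

/-- Radial unit vector e_r(x) = (x₁/r, x₂/r, 0). -/
def er (x : R3) : R3 := WithLp.toLp 2 (![x 0 / rr x, x 1 / rr x, 0] : Fin 3 → ℝ)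

/-- Toroidal unit vector e_∥(x) = (-x₂/r, x₁/r, 0). -/
def epar (x : R3) : R3 := WithLp.toLp 2 (![-(x 1) / rr x, x 0 / rr x, 0] : Fin 3 → ℝ)

/-- Vertical unit vector e_z = (0,0,1). -/
def ez : R3 := WithLp.toLp 2 (![0, 0, 1] : Fin 3 → ℝ)

/-- Cross product on ℝ³ (Euclidean). -/
def cross3 (u v : R3) : R3 := WithLp.toLp 2 (crossProduct u v)

lemma cross3_apply' (u v : R3) (i : Fin 3) :
    cross3 u v i = ![u 1 * v 2 - u 2 * v 1, u 2 * v 0 - u 0 * v 2, u 0 * v 1 - u 1 * v 0] i := rfl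

lemma inner_exp (u v : R3) : ⟪u, v⟫ = u 0 * v 0 + u 1 * v 1 + u 2 * v 2 := by
  simp [PiLp.inner_apply, Fin.sum_univ_three, mul_comm]

lemma norm_sq_exp (b : R3) : ‖b‖ ^ 2 = b 0 ^ 2 + b 1 ^ 2 + b 2 ^ 2 := by
  rw [← real_inner_self_eq_norm_sq, inner_exp]; ring

lemma cross3_sub_left (u v b : R3) : cross3 (u - v) b = cross3 u b - cross3 v b := by
  ext i
  simp only [PiLp.sub_apply, cross3_apply']
  fin_cases i <;>
  · simp only [Fin.reduceFinMk, Matrix.cons_val_zero, Matrix.cons_val_one, Matrix.head_cons,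
      Matrix.cons_val_two, Matrix.tail_cons, PiLp.sub_apply]
    ring

lemma key_inner (b w : R3) : ⟪w + cross3 w b, w⟫ = ‖w‖ ^ 2 := by
  rw [norm_sq_exp, inner_exp]
  simp only [PiLp.add_apply, cross3_apply', Matrix.cons_val_zero, Matrix.cons_val_one,
    Matrix.head_cons, Matrix.cons_val_two, Matrix.tail_cons]
  ring

/-- w ↦ w + w × b is invertible with explicit inverse
    c ↦ (c - c × b + ⟨c,b⟩ b)/(1 + |b|²). -/
theorem stmt_17 (b : R3) :
    Function.Bijective (fun w : R3 => w + cross3 w b) ∧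
    ∀ c : R3,
      ((1 + ‖b‖ ^ 2)⁻¹ • (c - cross3 c b + ⟪c, b⟫ • b))
        + cross3 ((1 + ‖b‖ ^ 2)⁻¹ • (c - cross3 c b + ⟪c, b⟫ • b)) b
        = c := by
  have hinv : ∀ c : R3,
      ((1 + ‖b‖ ^ 2)⁻¹ • (c - cross3 c b + ⟪c, b⟫ • b))
        + cross3 ((1 + ‖b‖ ^ 2)⁻¹ • (c - cross3 c b + ⟪c, b⟫ • b)) b
        = c := by
    intro c
    have hpos : (1 : ℝ) + ‖b‖ ^ 2 ≠ 0 := by positivity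
    ext i
    have h0 := norm_sq_exp b
    fin_cases i <;>
    · simp only [Fin.reduceFinMk, Fin.isValue, PiLp.add_apply, PiLp.sub_apply, PiLp.smul_apply, cross3_apply', inner_exp,
        smul_eq_mul, Matrix.cons_val_zero, Matrix.cons_val_one, Matrix.head_cons,
        Matrix.cons_val_two, Matrix.tail_cons]
      field_simp
      try simp only [Fin.reduceFinMk]
      rw [h0]; ring
  refine ⟨⟨?_, ?_⟩, hinv⟩
  · intro w₁ w₂ h
    simp only at h
    have hw : (w₁ - w₂) + cross3 (w₁ - w₂) b = 0 := by
      rw [cross3_sub_left, show w₁ - w₂ + (cross3 w₁ b - cross3 w₂ b)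
          = (w₁ + cross3 w₁ b) - (w₂ + cross3 w₂ b) by abel, h, sub_self]
    have h2 : ‖w₁ - w₂‖ ^ 2 = 0 := by
      rw [← key_inner b (w₁ - w₂), hw, inner_zero_left]
    have : w₁ - w₂ = 0 := by
      have := pow_eq_zero_iff (n := 2) (by norm_num) |>.mp h2
      exact norm_eq_zero.mp this
    exact sub_eq_zero.mp this
  · intro c
    exact ⟨_, hinv c⟩
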